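/- arXiv:2602.10617 — 4 statements merged into one kernel-verified Lean document; each statement's English description precedes it below -/
import Mathlib

section
/- The function u(r,θ) = (r³/9)(1 - cos(3(θ-θ₁))), defined in polar coordinates on the open cone {θ₁ < θ < θ₁ + 2π/3} and extended by zero elsewhere, is nonnegative on ℝ², vanishes together with its gradient on the boundary rays θ = θ₁ and θ = θ₁ + 2π/3, and satisfies Δu = |x| on the open cone. -/
/-!
On the sector, `u` is the restriction of `(|x|³ - Re (e^{-3iθ₁} z³)) / 9`. The cubic is harmonic, so
the Laplacian is that of `|x|³ / 9`, namely `|x|`. This extension is `≥ 0` on the whole plane and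
vanishes on both boundary rays, so it has a minimum, hence zero gradient, there; `u` lies between
`0` and the extension and inherits the value and the gradient.
-/

open Real Set

noncomputable def lap (f : ℝ × ℝ → ℝ) (p : ℝ × ℝ) : ℝ :=
  deriv (fun t => deriv (fun s => f (s, p.2)) t) p.1 +
  deriv (fun t => deriv (fun s => f (p.1, s)) t) p.2

noncomputable def nrm (p : ℝ × ℝ) : ℝ := Real.sqrt (p.1 ^ 2 + p.2 ^ 2)

open Filter Topology

lemma exists_polar_Ico (q : ℝ × ℝ) (α : ℝ) :
    ∃ r θ, 0 ≤ r ∧ α ≤ θ ∧ θ < α + 2 * π ∧ q = (r * cos θ, r * sin θ) := by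
  set z : ℂ := ⟨q.1, q.2⟩
  obtain ⟨hα, hα'⟩ := toIcoMod_mem_Ico two_pi_pos α z.arg
  refine ⟨‖z‖, _, norm_nonneg z, hα, hα', ?_⟩
  rw [← sub_add_cancel (toIcoMod two_pi_pos α z.arg) z.arg, toIcoMod_sub_self, zsmul_eq_mul,
    Int.cast_neg, neg_mul, neg_add_eq_sub, cos_sub_int_mul_two_pi, sin_sub_int_mul_two_pi,
    Complex.norm_mul_cos_arg, Complex.norm_mul_sin_arg]

lemma sq_add_sq_polar (r θ : ℝ) : (r * cos θ) ^ 2 + (r * sin θ) ^ 2 = r ^ 2 := by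
  linear_combination r ^ 2 * sin_sq_add_cos_sq θ

lemma sq_add_sq_polar_pos {r : ℝ} (θ : ℝ) (hr : 0 < r) : 0 < (r * cos θ) ^ 2 + (r * sin θ) ^ 2 :=
  sq_add_sq_polar r θ ▸ by positivity

def sector (α β : ℝ) : Set (ℝ × ℝ) :=
  {p | ∃ r θ : ℝ, 0 < r ∧ α < θ ∧ θ < β ∧ p = (r * cos θ, r * sin θ)}

lemma sector_eq_inter {α β : ℝ} (hαβ : α ≤ β) (hβα : β ≤ α + π) :
    sector α β = {q | 0 < cos α * q.2 - sin α * q.1} ∩ {q | 0 < sin β * q.1 - cos β * q.2} := by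
  have along (r θ φ : ℝ) :
      cos φ * (r * sin θ) - sin φ * (r * cos θ) = r * sin (θ - φ) ∧
      sin φ * (r * cos θ) - cos φ * (r * sin θ) = r * sin (φ - θ) := by
    rw [sin_sub, sin_sub]; constructor <;> ring
  ext q
  constructor
  · rintro ⟨r, θ, hr, h1, h2, rfl⟩
    simp only [mem_inter_iff, mem_ofPred_eq, (along r θ α).1, (along r θ β).2]
    exact ⟨mul_pos hr (sin_pos_of_pos_of_lt_pi (by linarith) (by linarith)),
      mul_pos hr (sin_pos_of_pos_of_lt_pi (by linarith) (by linarith))⟩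
  · rintro ⟨hA, hB⟩
    obtain ⟨r, θ, hr, h1, h2, rfl⟩ := exists_polar_Ico q α
    simp only [mem_ofPred_eq, (along r θ α).1, (along r θ β).2] at hA hB
    have hsA := pos_of_mul_pos_right hA hr
    have hsB := pos_of_mul_pos_right hB hr
    have hθα : α < θ := lt_of_le_of_ne h1 (by rintro rfl; simp at hsA)
    have hθ : θ < α + π := by
      by_contra! h
      have := sin_nonpos_of_nonpos_of_neg_pi_le (x := θ - α - 2 * π) (by linarith) (by linarith)
      rw [sin_sub_two_pi] at this
      exact hsA.not_ge this
    have hθβ : θ < β := by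
      by_contra! h
      exact hsB.not_ge (sin_nonpos_of_nonpos_of_neg_pi_le (by linarith) (by linarith))
    exact ⟨r, θ, pos_of_mul_pos_left hA hsA.le, hθα, hθβ, rfl⟩

lemma isOpen_sector {α β : ℝ} (hαβ : α ≤ β) (hβα : β ≤ α + π) : IsOpen (sector α β) := by
  rw [sector_eq_inter hαβ hβα]
  exact (isOpen_lt continuous_const (by fun_prop)).inter (isOpen_lt continuous_const (by fun_prop))

lemma hasDerivAt_sqrt_sq_add {c t : ℝ} (h : 0 < t ^ 2 + c) :
    HasDerivAt (fun s => √(s ^ 2 + c)) (t / √(t ^ 2 + c)) t := by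
  refine (((hasDerivAt_pow 2 t).add_const c).sqrt h.ne').congr_deriv ?_
  field_simp
  ring

lemma hasDerivAt_sqrt_sq_add_pow_three {c t : ℝ} (h : 0 < t ^ 2 + c) :
    HasDerivAt (fun s => √(s ^ 2 + c) ^ 3) (3 * t * √(t ^ 2 + c)) t := by
  refine ((hasDerivAt_sqrt_sq_add h).fun_pow 3).congr_deriv ?_
  have := (sqrt_pos.2 h).ne'
  field_simp
  ring

lemma hasDerivAt_mul_sqrt_sq_add {c t : ℝ} (h : 0 < t ^ 2 + c) :
    HasDerivAt (fun s => s * √(s ^ 2 + c)) (√(t ^ 2 + c) + t ^ 2 / √(t ^ 2 + c)) t := by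
  refine ((hasDerivAt_id' t).fun_mul (hasDerivAt_sqrt_sq_add h)).congr_deriv ?_
  ring

/-- For `a = cos 3θ₁`, `b = sin 3θ₁` this is `r³ (1 - cos (3 (θ - θ₁))) / 9` in polar coordinates
(`coneProfile_polar`); the cubic is the harmonic polynomial `Re ((a - i b) (x + i y)³)`. -/
noncomputable def profile (a b : ℝ) (p : ℝ × ℝ) : ℝ :=
  (nrm p ^ 3 - a * (p.1 ^ 3 - 3 * p.1 * p.2 ^ 2) - b * (3 * p.1 ^ 2 * p.2 - p.2 ^ 3)) / 9

lemma profile_comp_swap (a b : ℝ) : profile a b ∘ Prod.swap = profile (-b) (-a) := by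
  ext p
  simp only [Function.comp, profile, nrm, Prod.fst_swap, Prod.snd_swap, add_comm (p.2 ^ 2)]
  ring

lemma hasDerivAt_profile_fst (a b y t : ℝ) (h : 0 < t ^ 2 + y ^ 2) :
    HasDerivAt (fun s => profile a b (s, y))
      ((3 * t * √(t ^ 2 + y ^ 2) - 3 * a * (t ^ 2 - y ^ 2) - 6 * b * t * y) / 9) t := by
  have cubic : HasDerivAt (fun s => a * (s ^ 3 - 3 * s * y ^ 2) + b * (3 * s ^ 2 * y - y ^ 3))
      (3 * a * (t ^ 2 - y ^ 2) + 6 * b * t * y) t := by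
    refine ((((hasDerivAt_pow 3 t).fun_sub ((hasDerivAt_id' t).mul_const (3 * y ^ 2))).const_mul
      a).fun_add ((((hasDerivAt_pow 2 t).mul_const (3 * y)).sub_const (y ^ 3)).const_mul b)
      |>.congr_deriv ?_).congr_of_eventuallyEq (.of_forall fun s => ?_)
    · push_cast; ring
    · ring
  refine (((hasDerivAt_sqrt_sq_add_pow_three h).fun_sub cubic).div_const 9
    |>.congr_deriv ?_).congr_of_eventuallyEq (.of_forall fun s => ?_)
  · ring
  · simp only [profile, nrm]; ring

noncomputable def dxx (f : ℝ × ℝ → ℝ) (p : ℝ × ℝ) : ℝ :=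
  deriv (fun t => deriv (fun s => f (s, p.2)) t) p.1

lemma lap_eq_dxx_add_dxx_comp_swap (f : ℝ × ℝ → ℝ) (p : ℝ × ℝ) :
    lap f p = dxx f p + dxx (f ∘ Prod.swap) p.swap :=
  rfl

lemma dxx_profile (a b : ℝ) {p : ℝ × ℝ} (hp : 0 < p.1 ^ 2 + p.2 ^ 2) :
    dxx (profile a b) p = (3 * nrm p + 3 * p.1 ^ 2 / nrm p - 6 * a * p.1 - 6 * b * p.2) / 9 := by
  have near : ∀ᶠ t in 𝓝 p.1, 0 < t ^ 2 + p.2 ^ 2 :=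
    (isOpen_lt continuous_const (by fun_prop)).mem_nhds hp
  have slope : HasDerivAt
      (fun t => (3 * t * √(t ^ 2 + p.2 ^ 2) - 3 * a * (t ^ 2 - p.2 ^ 2) - 6 * b * t * p.2) / 9)
      ((3 * nrm p + 3 * p.1 ^ 2 / nrm p - 6 * a * p.1 - 6 * b * p.2) / 9) p.1 := by
    refine (((((hasDerivAt_mul_sqrt_sq_add hp).const_mul 3).fun_sub
      ((((hasDerivAt_pow 2 p.1).sub_const (p.2 ^ 2)).const_mul (3 * a)))).fun_sub
      ((hasDerivAt_id' p.1).mul_const (6 * b * p.2))).div_const 9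
      |>.congr_deriv ?_).congr_of_eventuallyEq (.of_forall fun t => ?_)
    · simp only [nrm]; push_cast; ring
    · ring
  rw [dxx, EventuallyEq.deriv_eq (near.mono fun t ht => (hasDerivAt_profile_fst a b _ t ht).deriv)]
  exact slope.deriv

lemma lap_profile (a b : ℝ) {p : ℝ × ℝ} (hp : 0 < p.1 ^ 2 + p.2 ^ 2) :
    lap (profile a b) p = nrm p := by
  have hn : nrm p ^ 2 = p.1 ^ 2 + p.2 ^ 2 := sq_sqrt hp.le
  have hn' : nrm p.swap = nrm p := by simp only [nrm, Prod.fst_swap, Prod.snd_swap, add_comm]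
  rw [lap_eq_dxx_add_dxx_comp_swap, profile_comp_swap, dxx_profile a b hp,
    dxx_profile (-b) (-a) (by simpa only [Prod.fst_swap, Prod.snd_swap, add_comm] using hp), hn']
  have : nrm p ≠ 0 := (sqrt_pos.2 hp).ne'
  field_simp
  simp only [Prod.fst_swap, Prod.snd_swap]
  linear_combination -3 * hn

lemma Filter.EventuallyEq.dxx_eq {f g : ℝ × ℝ → ℝ} {p : ℝ × ℝ} (h : f =ᶠ[𝓝 p] g) :
    dxx f p = dxx g p := by
  have slice (t : ℝ) : Tendsto (fun s : ℝ => (s, p.2)) (𝓝 t) (𝓝 (t, p.2)) :=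
    (continuous_id.prodMk continuous_const).tendsto t
  refine EventuallyEq.deriv_eq ?_
  filter_upwards [(slice p.1).eventually h.eventuallyEq_nhds] with t ht
  exact (ht.comp_tendsto (slice t)).deriv_eq

lemma lap_congr {f g : ℝ × ℝ → ℝ} {p : ℝ × ℝ} (h : f =ᶠ[𝓝 p] g) : lap f p = lap g p := by
  rw [lap_eq_dxx_add_dxx_comp_swap, lap_eq_dxx_add_dxx_comp_swap, h.dxx_eq,
    (h.comp_tendsto (continuous_swap.tendsto p.swap)).dxx_eq]

noncomputable abbrev coneProfile (θ₁ : ℝ) : ℝ × ℝ → ℝ :=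
  profile (cos (3 * θ₁)) (sin (3 * θ₁))

lemma coneProfile_polar (θ₁ r θ : ℝ) (hr : 0 ≤ r) :
    coneProfile θ₁ (r * cos θ, r * sin θ) = r ^ 3 / 9 * (1 - cos (3 * (θ - θ₁))) := by
  have hnrm : nrm (r * cos θ, r * sin θ) = r := by rw [nrm, sq_add_sq_polar, sqrt_sq hr]
  rw [coneProfile, profile, hnrm, mul_sub 3 θ θ₁, cos_sub, cos_three_mul θ, sin_three_mul θ]
  dsimp only
  linear_combination (r ^ 3 / 9) * (3 * cos θ * cos (3 * θ₁) - 3 * sin θ * sin (3 * θ₁)) *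
    sin_sq_add_cos_sq θ

lemma coneProfile_nonneg (θ₁ : ℝ) (p : ℝ × ℝ) : 0 ≤ coneProfile θ₁ p := by
  obtain ⟨r, θ, hr, -, -, rfl⟩ := exists_polar_Ico p 0
  rw [coneProfile_polar θ₁ r θ hr]
  exact mul_nonneg (by positivity) (sub_nonneg.2 (cos_le_one _))

lemma differentiableAt_profile (a b : ℝ) {p : ℝ × ℝ} (hp : 0 < p.1 ^ 2 + p.2 ^ 2) :
    DifferentiableAt ℝ (profile a b) p := by
  have : DifferentiableAt ℝ nrm p :=
    DifferentiableAt.sqrt (f := fun q : ℝ × ℝ => q.1 ^ 2 + q.2 ^ 2) (by fun_prop) hp.ne'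
  unfold profile
  fun_prop

lemma hasFDerivAt_zero_of_abs_le {E : Type*} [NormedAddCommGroup E] [NormedSpace ℝ E]
    {f g : E → ℝ} {a : E} (hg : HasFDerivAt g (0 : E →L[ℝ] ℝ) a) (hga : g a = 0)
    (hfg : ∀ x, |f x| ≤ g x) : HasFDerivAt f (0 : E →L[ℝ] ℝ) a := by
  have hfa : f a = 0 := abs_nonpos_iff.1 (hga ▸ hfg a)
  rw [hasFDerivAt_iff_isLittleO_nhds_zero] at hg ⊢
  refine (Asymptotics.IsBigO.of_bound' (l := 𝓝 (0 : E)) (.of_forall fun h => ?_)).trans_isLittleO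
    hg
  simp only [hfa, hga, zero_apply, sub_zero, norm_eq_abs]
  exact (hfg _).trans (le_abs_self _)

lemma coneProfile_eq_zero_of_cos_eq_one {θ₁ r θ : ℝ} (hr : 0 ≤ r)
    (hθ : cos (3 * (θ - θ₁)) = 1) : coneProfile θ₁ (r * cos θ, r * sin θ) = 0 := by
  rw [coneProfile_polar θ₁ r θ hr, hθ, sub_self, mul_zero]

lemma hasFDerivAt_coneProfile_of_cos_eq_one {θ₁ r θ : ℝ} (hr : 0 < r)
    (hθ : cos (3 * (θ - θ₁)) = 1) :
    HasFDerivAt (coneProfile θ₁) (0 : ℝ × ℝ →L[ℝ] ℝ) (r * cos θ, r * sin θ) := by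
  have hmin : IsLocalMin (coneProfile θ₁) (r * cos θ, r * sin θ) :=
    .of_forall fun q => coneProfile_eq_zero_of_cos_eq_one hr.le hθ ▸ coneProfile_nonneg θ₁ q
  exact hmin.fderiv_eq_zero ▸ (differentiableAt_profile _ _ (sq_add_sq_polar_pos θ hr)).hasFDerivAt

theorem stmt0_general (θ₁ : ℝ) (u : ℝ × ℝ → ℝ)
    (hcone : ∀ r θ : ℝ, 0 < r → θ₁ < θ → θ < θ₁ + 2 * π / 3 →
      u (r * cos θ, r * sin θ) = r ^ 3 / 9 * (1 - cos (3 * (θ - θ₁))))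
    (hzero : ∀ p : ℝ × ℝ,
      (¬ ∃ r θ : ℝ, 0 < r ∧ θ₁ < θ ∧ θ < θ₁ + 2 * π / 3 ∧
        p = (r * cos θ, r * sin θ)) → u p = 0) :
    (∀ p : ℝ × ℝ, 0 ≤ u p) ∧
    (∀ r : ℝ, 0 < r →
      (u (r * cos θ₁, r * sin θ₁) = 0 ∧ fderiv ℝ u (r * cos θ₁, r * sin θ₁) = 0) ∧
      (u (r * cos (θ₁ + 2 * π / 3), r * sin (θ₁ + 2 * π / 3)) = 0 ∧
        fderiv ℝ u (r * cos (θ₁ + 2 * π / 3), r * sin (θ₁ + 2 * π / 3)) = 0)) ∧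
    (∀ r θ : ℝ, 0 < r → θ₁ < θ → θ < θ₁ + 2 * π / 3 →
      lap u (r * cos θ, r * sin θ) = nrm (r * cos θ, r * sin θ)) := by
  have on_sector : ∀ q ∈ sector θ₁ (θ₁ + 2 * π / 3), u q = coneProfile θ₁ q := by
    rintro _ ⟨r, θ, hr, h1, h2, rfl⟩
    rw [hcone r θ hr h1 h2, coneProfile_polar θ₁ r θ hr.le]
  have bounds (q : ℝ × ℝ) : 0 ≤ u q ∧ u q ≤ coneProfile θ₁ q := by
    by_cases hq : q ∈ sector θ₁ (θ₁ + 2 * π / 3)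
    · rw [on_sector q hq]
      exact ⟨coneProfile_nonneg θ₁ q, le_rfl⟩
    · rw [hzero q hq]
      exact ⟨le_rfl, coneProfile_nonneg θ₁ q⟩
  have boundary {r θ : ℝ} (hr : 0 < r) (hθ : cos (3 * (θ - θ₁)) = 1) :
      u (r * cos θ, r * sin θ) = 0 ∧ fderiv ℝ u (r * cos θ, r * sin θ) = 0 := by
    have hF0 := coneProfile_eq_zero_of_cos_eq_one hr.le hθ
    refine ⟨le_antisymm (hF0 ▸ (bounds _).2) (bounds _).1, ?_⟩
    exact (hasFDerivAt_zero_of_abs_le (hasFDerivAt_coneProfile_of_cos_eq_one hr hθ) hF0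
      fun q => (abs_of_nonneg (bounds q).1).trans_le (bounds q).2).fderiv
  refine ⟨fun p => (bounds p).1, fun r hr => ⟨boundary hr (by simp), boundary hr ?_⟩, ?_⟩
  · rw [show 3 * (θ₁ + 2 * π / 3 - θ₁) = 2 * π by ring, cos_two_pi]
  · intro r θ hr h1 h2
    have near : u =ᶠ[𝓝 (r * cos θ, r * sin θ)] coneProfile θ₁ :=
      eventually_of_mem ((isOpen_sector (by linarith [pi_pos]) (by linarith [pi_pos])).mem_nhds
        ⟨r, θ, hr, h1, h2, rfl⟩) on_sector
    rw [lap_congr near, lap_profile _ _ (sq_add_sq_polar_pos θ hr)]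

theorem stmt0 (θ₁ : ℝ) (hθ₁ : θ₁ ∈ Set.Ico 0 (2 * π)) (u : ℝ × ℝ → ℝ)
    (hcone : ∀ r θ : ℝ, 0 < r → θ₁ < θ → θ < θ₁ + 2 * π / 3 →
      u (r * cos θ, r * sin θ) = r ^ 3 / 9 * (1 - cos (3 * (θ - θ₁))))
    (hzero : ∀ p : ℝ × ℝ,
      (¬ ∃ r θ : ℝ, 0 < r ∧ θ₁ < θ ∧ θ < θ₁ + 2 * π / 3 ∧
        p = (r * cos θ, r * sin θ)) → u p = 0) :
    (∀ p : ℝ × ℝ, 0 ≤ u p) ∧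
    (∀ r : ℝ, 0 < r →
      (u (r * cos θ₁, r * sin θ₁) = 0 ∧ fderiv ℝ u (r * cos θ₁, r * sin θ₁) = 0) ∧
      (u (r * cos (θ₁ + 2 * π / 3), r * sin (θ₁ + 2 * π / 3)) = 0 ∧
        fderiv ℝ u (r * cos (θ₁ + 2 * π / 3), r * sin (θ₁ + 2 * π / 3)) = 0)) ∧
    (∀ r θ : ℝ, 0 < r → θ₁ < θ → θ < θ₁ + 2 * π / 3 →
      lap u (r * cos θ, r * sin θ) = nrm (r * cos θ, r * sin θ)) :=
  stmt0_general θ₁ u hcone hzero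
end

section
/- There exists a constant C > 0, independent of θ₁, such that for the 3-homogeneous solution u(r,θ) = (r³/9)(1 − cos 3(θ−θ₁)) on the cone {θ₁ < θ < θ₁+2π/3} (extended by zero), one has u(x) ≥ C·d(x)²·(|x| + d(x)) for all x ∈ ℝ², where d(x) = dist(x, {u = 0}). -/
open Real Set

private lemma key_poly (x : ℝ) (h1 : 0 ≤ x) (h2 : x ≤ π / 3) :
    2 * sin x ^ 2 ≤ 1 - cos (3 * x) := by
  have hpi := Real.pi_pos
  have hc1 : cos x ≤ 1 := Real.cos_le_one x
  have hc : 1 / 2 ≤ cos x := by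
    rw [← Real.cos_pi_div_three]
    exact Real.cos_le_cos_of_nonneg_of_le_pi h1 (by linarith) h2
  have h3 := Real.cos_three_mul x
  have h4 := Real.sin_sq x
  nlinarith [mul_nonneg (by linarith : (0:ℝ) ≤ 1 - cos x)
    (by nlinarith : (0:ℝ) ≤ 4 * cos x ^ 2 + 2 * cos x - 1)]

private lemma aux_est (r d sx c3 : ℝ) (hr : 0 < r) (hd0 : 0 ≤ d) (hdr : d ≤ r)
    (hds : d ≤ r * sx) (_hsx : 0 ≤ sx) (hkey : 2 * sx ^ 2 ≤ 1 - c3) :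
    1 / 18 * d ^ 2 * (r + d) ≤ r ^ 3 / 9 * (1 - c3) := by
  have h1 : d ^ 2 * (r + d) ≤ (r * sx) ^ 2 * (2 * r) := by
    apply mul_le_mul (by nlinarith) (by linarith) (by linarith) (by positivity)
  nlinarith [mul_le_mul_of_nonneg_left hkey (by positivity : (0:ℝ) ≤ r ^ 3 / 18)]

private lemma dist_sq_ray (r θ α : ℝ) :
    (r * cos θ - r * cos (θ - α) * cos α) ^ 2 +
      (r * sin θ - r * cos (θ - α) * sin α) ^ 2 = (r * sin (θ - α)) ^ 2 := by
  rw [Real.cos_sub, Real.sin_sub]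
  linear_combination (r ^ 2 * ((cos θ * cos α + sin θ * sin α) ^ 2 - cos θ ^ 2 - sin θ ^ 2)) *
    Real.sin_sq_add_cos_sq α

private lemma ray_ne (θ₁ s α : ℝ) (hs : 0 ≤ s)
    (hα : ∀ θ : ℝ, θ₁ < θ → θ < θ₁ + 2 * π / 3 → cos (θ - α) ≠ 1) :
    ¬ ∃ r θ : ℝ, 0 < r ∧ θ₁ < θ ∧ θ < θ₁ + 2 * π / 3 ∧
      ((s * cos α, s * sin α) : ℝ × ℝ) = (r * cos θ, r * sin θ) := by
  rintro ⟨r, θ, hr, h1, h2, heq⟩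
  rw [Prod.mk.injEq] at heq
  obtain ⟨e1, e2⟩ := heq
  have q1 : (s * cos α) ^ 2 = (r * cos θ) ^ 2 := by rw [e1]
  have q2 : (s * sin α) ^ 2 = (r * sin θ) ^ 2 := by rw [e2]
  have hA := Real.sin_sq_add_cos_sq α
  have hT := Real.sin_sq_add_cos_sq θ
  have hs2 : s ^ 2 = r ^ 2 := by linear_combination q1 + q2 - s ^ 2 * hA + r ^ 2 * hT
  have hsr : s = r := by nlinarith
  subst hsr
  have hc : cos α = cos θ := mul_left_cancel₀ hr.ne' e1
  have hsn : sin α = sin θ := mul_left_cancel₀ hr.ne' e2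
  refine hα θ h1 h2 ?_
  rw [Real.cos_sub, ← hc, ← hsn]
  linear_combination hA

theorem stmt8 :
    ∃ C : ℝ, 0 < C ∧
      ∀ θ₁ ∈ Set.Ico (0 : ℝ) (2 * π), ∀ u : ℝ × ℝ → ℝ,
        (∀ r θ : ℝ, 0 < r → θ₁ < θ → θ < θ₁ + 2 * π / 3 →
          u (r * cos θ, r * sin θ) = r ^ 3 / 9 * (1 - cos (3 * (θ - θ₁)))) →
        (∀ p : ℝ × ℝ,
          (¬ ∃ r θ : ℝ, 0 < r ∧ θ₁ < θ ∧ θ < θ₁ + 2 * π / 3 ∧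
            p = (r * cos θ, r * sin θ)) → u p = 0) →
        ∀ p : ℝ × ℝ, ∀ d : ℝ,
          d = sInf {t : ℝ | ∃ q : ℝ × ℝ, u q = 0 ∧ t = nrm (p.1 - q.1, p.2 - q.2)} →
          C * d ^ 2 * (nrm p + d) ≤ u p := by
  have hpi := Real.pi_pos
  refine ⟨1 / 18, by norm_num, ?_⟩
  intro θ₁ hθ₁ u hu h0 p d hd
  have hbdd : BddBelow {t : ℝ | ∃ q : ℝ × ℝ, u q = 0 ∧ t = nrm (p.1 - q.1, p.2 - q.2)} := by
    refine ⟨0, ?_⟩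
    rintro t ⟨q, hq, rfl⟩
    exact Real.sqrt_nonneg _
  have hzero_origin : u (0, 0) = 0 := by
    apply h0
    rintro ⟨r, θ, hr, _, _, heq⟩
    rw [Prod.mk.injEq] at heq
    have e1 : r * cos θ = 0 := heq.1.symm
    have e2 : r * sin θ = 0 := heq.2.symm
    have hT := Real.sin_sq_add_cos_sq θ
    have hr2 : r ^ 2 = 0 := by
      linear_combination (r * cos θ) * e1 + (r * sin θ) * e2 - r ^ 2 * hT
    nlinarith
  by_cases hex : ∃ r θ : ℝ, 0 < r ∧ θ₁ < θ ∧ θ < θ₁ + 2 * π / 3 ∧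
      p = (r * cos θ, r * sin θ)
  · obtain ⟨r, θ, hr, h1, h2, hp⟩ := hex
    subst hp
    subst hd
    set S := {t : ℝ | ∃ q : ℝ × ℝ, u q = 0 ∧
      t = nrm (((r * cos θ, r * sin θ) : ℝ × ℝ).1 - q.1,
               ((r * cos θ, r * sin θ) : ℝ × ℝ).2 - q.2)} with hS
    have hnrmp : nrm (r * cos θ, r * sin θ) = r := by
      unfold nrm
      rw [show ((r * cos θ, r * sin θ) : ℝ × ℝ).1 ^ 2 +
          ((r * cos θ, r * sin θ) : ℝ × ℝ).2 ^ 2 = r ^ 2 by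
        simp only
        linear_combination r ^ 2 * Real.sin_sq_add_cos_sq θ]
      exact Real.sqrt_sq hr.le
    have hdr : sInf S ≤ r := by
      apply csInf_le hbdd
      refine ⟨(0, 0), hzero_origin, ?_⟩
      simp only
      rw [sub_zero, sub_zero]
      exact (hnrmp).symm
    have hd0 : 0 ≤ sInf S :=
      le_csInf ⟨r, (0, 0), hzero_origin, by
          simp only; rw [sub_zero, sub_zero]; exact hnrmp.symm⟩
        (by rintro t ⟨q, hq, rfl⟩; exact Real.sqrt_nonneg _)
    -- distance to a ray of angle α, given cos (θ - α) ≥ 0 and the ray is outside the cone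
    have ray_bound : ∀ α : ℝ, 0 ≤ cos (θ - α) →
        (∀ θ' : ℝ, θ₁ < θ' → θ' < θ₁ + 2 * π / 3 → cos (θ' - α) ≠ 1) →
        sInf S ≤ |r * sin (θ - α)| := by
      intro α hcnn hα
      apply csInf_le hbdd
      refine ⟨(r * cos (θ - α) * cos α, r * cos (θ - α) * sin α), ?_, ?_⟩
      · exact h0 _ (ray_ne θ₁ (r * cos (θ - α)) α (mul_nonneg hr.le hcnn) hα)
      · simp only
        rw [show nrm (r * cos θ - r * cos (θ - α) * cos α,
            r * sin θ - r * cos (θ - α) * sin α) =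
            Real.sqrt ((r * cos θ - r * cos (θ - α) * cos α) ^ 2 +
              (r * sin θ - r * cos (θ - α) * sin α) ^ 2) from rfl]
        rw [dist_sq_ray, Real.sqrt_sq_eq_abs]
    rw [hu r θ hr h1 h2, hnrmp]
    by_cases hφ : θ - θ₁ ≤ π / 3
    · -- near the ray θ₁
      have hφ0 : 0 < θ - θ₁ := by linarith
      have hcnn : 0 ≤ cos (θ - θ₁) :=
        Real.cos_nonneg_of_mem_Icc ⟨by linarith, by linarith⟩
      have hα : ∀ θ' : ℝ, θ₁ < θ' → θ' < θ₁ + 2 * π / 3 → cos (θ' - θ₁) ≠ 1 := by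
        intro θ' ha hb hc
        have := (Real.cos_eq_one_iff_of_lt_of_lt (x := θ' - θ₁)
          (by linarith) (by linarith)).mp hc
        linarith
      have hds := ray_bound θ₁ hcnn hα
      have hsin : 0 ≤ sin (θ - θ₁) :=
        Real.sin_nonneg_of_nonneg_of_le_pi hφ0.le (by linarith)
      rw [abs_of_nonneg (mul_nonneg hr.le hsin)] at hds
      exact aux_est r (sInf S) (sin (θ - θ₁)) _ hr hd0 hdr hds hsin
        (key_poly _ hφ0.le hφ)
    · -- near the ray θ₁ + 2π/3
      push_neg at hφ
      obtain ⟨ψ, hψdef⟩ : ∃ ψ : ℝ, ψ = θ₁ + 2 * π / 3 - θ := ⟨_, rfl⟩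
      have hψ0 : 0 < ψ := by rw [hψdef]; linarith
      have hψ3 : ψ ≤ π / 3 := by rw [hψdef]; linarith
      have hθα : θ - (θ₁ + 2 * π / 3) = -ψ := by rw [hψdef]; ring
      have hcnn : 0 ≤ cos (θ - (θ₁ + 2 * π / 3)) := by
        rw [hθα, Real.cos_neg]
        exact Real.cos_nonneg_of_mem_Icc ⟨by linarith, by linarith⟩
      have hα : ∀ θ' : ℝ, θ₁ < θ' → θ' < θ₁ + 2 * π / 3 →
          cos (θ' - (θ₁ + 2 * π / 3)) ≠ 1 := by
        intro θ' ha hb hc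
        have := (Real.cos_eq_one_iff_of_lt_of_lt (x := θ' - (θ₁ + 2 * π / 3))
          (by linarith) (by linarith)).mp hc
        linarith
      have hds := ray_bound (θ₁ + 2 * π / 3) hcnn hα
      have hsin : 0 ≤ sin ψ :=
        Real.sin_nonneg_of_nonneg_of_le_pi hψ0.le (by linarith)
      rw [hθα, Real.sin_neg, abs_mul, abs_neg, abs_of_nonneg hsin,
        abs_of_nonneg hr.le] at hds
      have hcos3 : cos (3 * (θ - θ₁)) = cos (3 * ψ) := by
        rw [show 3 * (θ - θ₁) = 2 * π - 3 * ψ by rw [hψdef]; ring,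
          Real.cos_two_pi_sub]
      rw [hcos3]
      exact aux_est r (sInf S) (sin ψ) _ hr hd0 hdr hds hsin
        (key_poly _ hψ0.le hψ3)
  · have hup : u p = 0 := h0 p hex
    have hmem : (0 : ℝ) ∈ {t : ℝ | ∃ q : ℝ × ℝ, u q = 0 ∧
        t = nrm (p.1 - q.1, p.2 - q.2)} := by
      refine ⟨p, hup, ?_⟩
      simp [nrm]
    have hle : d ≤ 0 := hd ▸ csInf_le hbdd hmem
    have hge : 0 ≤ d := hd ▸ le_csInf ⟨0, hmem⟩ (by rintro t ⟨q, hq, rfl⟩; exact Real.sqrt_nonneg _)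
    have : d = 0 := le_antisymm hle hge
    subst this
    simp [hup]
end

section
/- Let u* (r,θ) = (r³/9)(1 − sin 3θ) on the cone {π/6 < θ < 5π/6} ⊂ ℝ², let e = (−sin(π/6+γ), cos(π/6+γ)) with γ ∈ (−π/2, π/2), let e* = (−1/2, √3/2), and let c₀ > 0, ε > 0. If e·e* ≥ ((c₀+1)/(2c₀))·ε, then c₀ ∂_e u* − u* ≥ 0 on (B₁ \ {0}) ∩ {π/6 < θ < π/6 + ε}. -/
/-!
Inside the cone `u*` agrees with the smooth function `cubicProfile`, so its directional
derivative is the classical one. With `θ = π/6 + φ`, sum-to-product turns it into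
`∂_e u* = (2r²/3) sin (3φ/2) cos (γ + φ/2)`, while `u* = (2r³/9) sin² (3φ/2)`; hence
`c₀ ∂_e u* - u* = (2r²/9) sin (3φ/2) (3c₀ cos (γ + φ/2) - r sin (3φ/2))`.
As `e·e* = cos γ` and `cos` is 1-Lipschitz,
`3c₀ cos (γ + φ/2) ≥ 3c₀ cos γ - 3c₀φ/2 ≥ 3φ/2 ≥ sin (3φ/2)`.
-/

open Real Set Filter Topology

-- `u*` in Cartesian coordinates, using `r³ sin 3θ = 3x²y - y³`.
noncomputable def cubicProfile (q : ℝ × ℝ) : ℝ :=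
  (√(q.1 ^ 2 + q.2 ^ 2) ^ 3 - 3 * q.1 ^ 2 * q.2 + q.2 ^ 3) / 9

lemma cubicProfile_polar {r : ℝ} (hr : 0 ≤ r) (θ : ℝ) :
    cubicProfile (r * cos θ, r * sin θ) = r ^ 3 / 9 * (1 - sin (3 * θ)) := by
  have hnorm : (r * cos θ) ^ 2 + (r * sin θ) ^ 2 = r ^ 2 := by
    linear_combination r ^ 2 * cos_sq_add_sin_sq θ
  rw [cubicProfile, hnorm, sqrt_sq hr, sin_three_mul]
  linear_combination (-(r ^ 3 * sin θ) / 3) * sin_sq_add_cos_sq θ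

lemma eventuallyEq_cubicProfile {u : ℝ × ℝ → ℝ}
    (hu : ∀ r θ : ℝ, 0 < r → π / 6 < θ → θ < 5 * π / 6 →
      u (r * cos θ, r * sin θ) = r ^ 3 / 9 * (1 - sin (3 * θ)))
    {r θ : ℝ} (hr : 0 < r) (hθ : π / 6 < θ) (hθ' : θ < 5 * π / 6) :
    u =ᶠ[𝓝 (r * cos θ, r * sin θ)] cubicProfile := by
  have hsub : Ioi 0 ×ˢ Ioo (π / 6) (5 * π / 6) ⊆ polarCoord.symm.source := by
    rintro ⟨ρ, φ⟩ ⟨hρ, hφ, hφ'⟩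
    exact ⟨hρ, by linarith [pi_pos], by linarith [pi_pos]⟩
  have hopen := polarCoord.symm.isOpen_image_of_subset_source (isOpen_Ioi.prod isOpen_Ioo) hsub
  filter_upwards [hopen.mem_nhds ⟨(r, θ), ⟨hr, hθ, hθ'⟩, rfl⟩]
  rintro _ ⟨⟨ρ, φ⟩, ⟨hρ, hφ, hφ'⟩, rfl⟩
  exact (hu ρ φ hρ hφ hφ').trans (cubicProfile_polar hρ.le φ).symm

lemma hasLineDerivAt_cubicProfile {p : ℝ × ℝ} (hp : p ≠ 0) (v : ℝ × ℝ) :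
    HasLineDerivAt ℝ cubicProfile
      ((√(p.1 ^ 2 + p.2 ^ 2) * (p.1 * v.1 + p.2 * v.2) - 2 * p.1 * p.2 * v.1
        + (p.2 ^ 2 - p.1 ^ 2) * v.2) / 3) p v := by
  obtain ⟨x, y⟩ := p
  obtain ⟨a, b⟩ := v
  have hpos : 0 < x ^ 2 + y ^ 2 := by
    contrapose! hp
    have hx : x = 0 := by nlinarith [sq_nonneg x, sq_nonneg y]
    have hy : y = 0 := by nlinarith [sq_nonneg x, sq_nonneg y]
    simp [hx, hy]
  have hX : HasDerivAt (fun t : ℝ => x + t * a) a 0 := by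
    simpa using ((hasDerivAt_id (0 : ℝ)).mul_const a).const_add x
  have hY : HasDerivAt (fun t : ℝ => y + t * b) b 0 := by
    simpa using ((hasDerivAt_id (0 : ℝ)).mul_const b).const_add y
  have hN := ((hX.fun_pow 2).fun_add (hY.fun_pow 2)).sqrt (by simpa using hpos.ne')
  have h := (((hN.fun_pow 3).fun_sub (((hX.fun_pow 2).const_mul 3).fun_mul hY)).fun_add
    (hY.fun_pow 3)).div_const 9
  refine h.congr_deriv ?_
  norm_num
  field_simp
  ring

lemma hasLineDerivAt_cubicProfile_polar {r : ℝ} (hr : 0 < r) (θ α : ℝ) :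
    HasLineDerivAt ℝ cubicProfile (r ^ 2 / 3 * (sin (θ - α) - cos (2 * θ + α)))
      (r * cos θ, r * sin θ) (-sin α, cos α) := by
  have hp : (r * cos θ, r * sin θ) ≠ 0 := by
    intro h
    simp only [Prod.mk_eq_zero, mul_eq_zero, hr.ne', false_or] at h
    simpa [h.1, h.2] using sin_sq_add_cos_sq θ
  have hnorm : (r * cos θ) ^ 2 + (r * sin θ) ^ 2 = r ^ 2 := by
    linear_combination r ^ 2 * cos_sq_add_sin_sq θ
  convert hasLineDerivAt_cubicProfile hp (-sin α, cos α) using 1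
  rw [hnorm, sqrt_sq hr.le, sin_sub, cos_add, sin_two_mul, cos_two_mul']
  ring

lemma one_sub_sin_three_mul_pi_div_six_add (φ : ℝ) :
    1 - sin (3 * (π / 6 + φ)) = 2 * sin (3 * φ / 2) ^ 2 := by
  rw [show 3 * (π / 6 + φ) = 2 * (3 * φ / 2) + π / 2 by ring, sin_add_pi_div_two, cos_two_mul]
  linear_combination -2 * sin_sq_add_cos_sq (3 * φ / 2)

lemma sin_sub_sub_cos_add_pi_div_six (φ γ : ℝ) :
    sin ((π / 6 + φ) - (π / 6 + γ)) - cos (2 * (π / 6 + φ) + (π / 6 + γ)) =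
      2 * sin (3 * φ / 2) * cos (γ + φ / 2) := by
  rw [show (π / 6 + φ) - (π / 6 + γ) = 3 * φ / 2 - (γ + φ / 2) by ring,
    show 2 * (π / 6 + φ) + (π / 6 + γ) = (3 * φ / 2 + (γ + φ / 2)) + π / 2 by ring,
    cos_add_pi_div_two, sin_sub (3 * φ / 2), sin_add (3 * φ / 2)]
  ring

lemma sin_three_mul_half_le_of_mul_le_cos {c₀ γ φ : ℝ} (hc₀ : 0 ≤ c₀) (hφ : 0 ≤ φ)
    (h : (c₀ + 1) * φ ≤ 2 * c₀ * cos γ) :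
    sin (3 * φ / 2) ≤ 3 * c₀ * cos (γ + φ / 2) := by
  have hsin : sin (3 * φ / 2) ≤ 3 * φ / 2 := sin_le (by positivity)
  have hcos : cos γ - φ / 2 ≤ cos (γ + φ / 2) := by
    have := (abs_le.1 (abs_cos_sub_cos_le γ (γ + φ / 2))).2
    rw [show γ - (γ + φ / 2) = -(φ / 2) by ring, abs_neg, abs_of_nonneg (by positivity)] at this
    linarith
  nlinarith [mul_le_mul_of_nonneg_left hcos hc₀]

theorem stmt10_general (γ c₀ ε : ℝ) (hc₀ : 0 < c₀)
    (ustar : ℝ × ℝ → ℝ)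
    (hcone : ∀ r θ : ℝ, 0 < r → π / 6 < θ → θ < 5 * π / 6 →
      ustar (r * cos θ, r * sin θ) = r ^ 3 / 9 * (1 - sin (3 * θ)))
    (hdot : (-sin (π / 6 + γ)) * (-(1 / 2)) + cos (π / 6 + γ) * (Real.sqrt 3 / 2) ≥
      (c₀ + 1) / (2 * c₀) * ε) :
    ∀ r θ : ℝ, 0 < r → r < 1 → π / 6 < θ → θ < π / 6 + ε →
      0 ≤ c₀ * lineDeriv ℝ ustar (r * cos θ, r * sin θ)
            (-sin (π / 6 + γ), cos (π / 6 + γ)) -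
          ustar (r * cos θ, r * sin θ) := by
  intro r θ hr hr1 hθ hθε
  obtain ⟨φ, rfl⟩ : ∃ φ, θ = π / 6 + φ := ⟨θ - π / 6, by ring⟩
  have hφ : 0 < φ := by linarith
  have hdot_eq : (-sin (π / 6 + γ)) * (-(1 / 2)) + cos (π / 6 + γ) * (√3 / 2) = cos γ := by
    rw [sin_add, cos_add, sin_pi_div_six, cos_pi_div_six]
    linear_combination (cos γ / 4) * sq_sqrt (show (0 : ℝ) ≤ 3 by norm_num)
  have hsep : (c₀ + 1) * φ ≤ 2 * c₀ * cos γ := by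
    rw [hdot_eq, ge_iff_le, div_mul_eq_mul_div, div_le_iff₀ (by positivity)] at hdot
    nlinarith
  have hφ2 : φ < 2 := by nlinarith [cos_le_one γ]
  have hθ' : π / 6 + φ < 5 * π / 6 := by linarith [pi_gt_three]
  have hs : 0 ≤ sin (3 * φ / 2) :=
    sin_nonneg_of_nonneg_of_le_pi (by positivity) (by linarith [pi_gt_three])
  have hu : ustar (r * cos (π / 6 + φ), r * sin (π / 6 + φ)) =
      r ^ 3 / 9 * (2 * sin (3 * φ / 2) ^ 2) := by
    rw [hcone r _ hr hθ hθ', one_sub_sin_three_mul_pi_div_six_add]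
  have hD : lineDeriv ℝ ustar (r * cos (π / 6 + φ), r * sin (π / 6 + φ))
      (-sin (π / 6 + γ), cos (π / 6 + γ)) =
        r ^ 2 / 3 * (2 * sin (3 * φ / 2) * cos (γ + φ / 2)) := by
    rw [((hasLineDerivAt_cubicProfile_polar hr _ _).congr_of_eventuallyEq
      (eventuallyEq_cubicProfile hcone hr hθ hθ')).lineDeriv, sin_sub_sub_cos_add_pi_div_six]
  have hkey : r * sin (3 * φ / 2) ≤ 3 * c₀ * cos (γ + φ / 2) :=
    (mul_le_of_le_one_left hs hr1.le).trans
      (sin_three_mul_half_le_of_mul_le_cos hc₀.le hφ.le hsep)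
  rw [hu, hD]
  calc (0 : ℝ) ≤ 2 * r ^ 2 / 9 * sin (3 * φ / 2) *
        (3 * c₀ * cos (γ + φ / 2) - r * sin (3 * φ / 2)) :=
      mul_nonneg (mul_nonneg (by positivity) hs) (sub_nonneg.2 hkey)
    _ = _ := by ring

theorem stmt10 (γ c₀ ε : ℝ) (hγ : γ ∈ Set.Ioo (-(π / 2)) (π / 2)) (hc₀ : 0 < c₀) (hε : 0 < ε)
    (ustar : ℝ × ℝ → ℝ)
    (hcone : ∀ r θ : ℝ, 0 < r → π / 6 < θ → θ < 5 * π / 6 →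
      ustar (r * cos θ, r * sin θ) = r ^ 3 / 9 * (1 - sin (3 * θ)))
    (hzero : ∀ p : ℝ × ℝ,
      (¬ ∃ r θ : ℝ, 0 < r ∧ π / 6 < θ ∧ θ < 5 * π / 6 ∧
        p = (r * cos θ, r * sin θ)) → ustar p = 0)
    (hdot : (-sin (π / 6 + γ)) * (-(1 / 2)) + cos (π / 6 + γ) * (Real.sqrt 3 / 2) ≥
      (c₀ + 1) / (2 * c₀) * ε) :
    ∀ r θ : ℝ, 0 < r → r < 1 → π / 6 < θ → θ < π / 6 + ε →
      0 ≤ c₀ * lineDeriv ℝ ustar (r * cos θ, r * sin θ)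
            (-sin (π / 6 + γ), cos (π / 6 + γ)) -
          ustar (r * cos θ, r * sin θ) :=
  stmt10_general γ c₀ ε hc₀ ustar hcone hdot
end

section
/- Let e : (0, r₀) → [0, ∞) be nondecreasing with e(r) ≤ C₀ (r/r₀)^{α} for α = 6κ/(1−κ), κ ∈ (0,1), and suppose F : (0,r₀) → ℝ satisfies, for all 0 < t < σ < r₀, |F(σ) − F(t)| ≤ C (log σ − log t)^{1/2} (e(σ) − e(t))^{1/2}. Then the dyadic summation estimate gives: for 0 < ρ < r < r₀/2, |F(r) − F(ρ)| ≤ C(κ) r^{α/2}. In particular F has a limit as r → 0⁺ and |F(r) − F(0⁺)| ≤ C(κ) r^{3κ/(1−κ)}. -/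
open Real Set Filter Topology

set_option maxHeartbeats 1600000 in
theorem stmt17 (κ r₀ C₀ C : ℝ) (hκ : κ ∈ Set.Ioo (0 : ℝ) 1) (hr₀ : 0 < r₀)
    (hC₀ : 0 ≤ C₀) (hC : 0 < C) (e F : ℝ → ℝ)
    (hmono : ∀ s t : ℝ, 0 < s → s ≤ t → t < r₀ → e s ≤ e t)
    (hnn : ∀ r ∈ Set.Ioo (0 : ℝ) r₀, 0 ≤ e r)
    (hdecay : ∀ r ∈ Set.Ioo (0 : ℝ) r₀, e r ≤ C₀ * (r / r₀) ^ (6 * κ / (1 - κ)))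
    (hF : ∀ t σ : ℝ, 0 < t → t < σ → σ < r₀ →
      |F σ - F t| ≤ C * Real.sqrt (Real.log σ - Real.log t) * Real.sqrt (e σ - e t)) :
    ∃ C' : ℝ, 0 < C' ∧
      (∀ ρ r : ℝ, 0 < ρ → ρ < r → r < r₀ / 2 →
        |F r - F ρ| ≤ C' * r ^ (3 * κ / (1 - κ))) ∧
      ∃ L : ℝ, Tendsto F (nhdsWithin 0 (Set.Ioi 0)) (nhds L) ∧
        ∀ r ∈ Set.Ioo (0 : ℝ) (r₀ / 2), |F r - L| ≤ C' * r ^ (3 * κ / (1 - κ)) := by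
  obtain ⟨hκ0, hκ1⟩ := hκ
  have h1κ : 0 < 1 - κ := by linarith
  set β : ℝ := 3 * κ / (1 - κ) with hβdef
  have hβ : 0 < β := by positivity
  have hα : 6 * κ / (1 - κ) = 2 * β := by rw [hβdef]; ring
  set q : ℝ := (2:ℝ) ^ (-β) with hqdef
  have hq0 : 0 < q := Real.rpow_pos_of_pos (by norm_num) _
  have hq1 : q < 1 := Real.rpow_lt_one_of_one_lt_of_neg (by norm_num) (by linarith)
  have hr₀β : 0 < r₀ ^ β := Real.rpow_pos_of_pos hr₀ _
  set K : ℝ := C * Real.sqrt (Real.log 2) * Real.sqrt C₀ / r₀ ^ β with hKdef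
  have hK0 : 0 ≤ K := by positivity
  set D : ℝ := K / (1 - q) with hDdef
  have hD0 : 0 ≤ D := div_nonneg hK0 (by linarith)
  have hDq : K + D * q = D := by
    have h := div_mul_cancel₀ K (show (1:ℝ) - q ≠ 0 by intro h; linarith)
    rw [hDdef]; linear_combination (-1 : ℝ) * h
  -- single dyadic step
  have step : ∀ t s : ℝ, 0 < t → t ≤ s → s ≤ 2 * t → s < r₀ → |F s - F t| ≤ K * s ^ β := by
    intro t s ht hts hs2 hsr
    have hs : 0 < s := lt_of_lt_of_le ht hts
    have hsβ : (0:ℝ) ≤ s ^ β := Real.rpow_nonneg hs.le _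
    rcases eq_or_lt_of_le hts with h | h
    · rw [h]; simp; positivity
    · have h1 := hF t s ht h hsr
      have hlog : Real.sqrt (Real.log s - Real.log t) ≤ Real.sqrt (Real.log 2) := by
        apply Real.sqrt_le_sqrt
        have h2 : Real.log s ≤ Real.log (2 * t) := Real.log_le_log hs hs2
        rw [Real.log_mul (by norm_num) (ne_of_gt ht)] at h2
        linarith
      have het : 0 ≤ e t := hnn t ⟨ht, lt_trans (lt_of_lt_of_le h (le_refl s)) hsr⟩
      have hes : e s ≤ C₀ * ((s / r₀) ^ β) ^ 2 := by
        have h3 := hdecay s ⟨hs, hsr⟩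
        have h4 : (s / r₀) ^ (6 * κ / (1 - κ)) = ((s / r₀) ^ β) ^ 2 := by
          rw [hα, ← Real.rpow_natCast ((s/r₀) ^ β) 2, ← Real.rpow_mul (by positivity)]
          norm_num [mul_comm]
        rw [h4] at h3; exact h3
      have hsqe : Real.sqrt (e s - e t) ≤ Real.sqrt C₀ * (s / r₀) ^ β := by
        have h5 : Real.sqrt (e s - e t) ≤ Real.sqrt (C₀ * ((s / r₀) ^ β) ^ 2) :=
          Real.sqrt_le_sqrt (by linarith)
        rw [Real.sqrt_mul hC₀, Real.sqrt_sq (by positivity)] at h5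
        exact h5
      have hdiv : (s / r₀) ^ β = s ^ β / r₀ ^ β := Real.div_rpow hs.le hr₀.le β
      calc |F s - F t| ≤ C * Real.sqrt (Real.log s - Real.log t) * Real.sqrt (e s - e t) := h1
        _ ≤ C * Real.sqrt (Real.log 2) * (Real.sqrt C₀ * (s / r₀) ^ β) := by
            apply mul_le_mul _ hsqe (Real.sqrt_nonneg _) (by positivity)
            exact mul_le_mul_of_nonneg_left hlog hC.le
        _ = K * s ^ β := by rw [hdiv, hKdef]; ring
  -- dyadic iteration
  have key : ∀ n : ℕ, ∀ r : ℝ, 0 < r → r < r₀ / 2 →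
      |F r - F (r * (2:ℝ)⁻¹ ^ n)| ≤ D * r ^ β := by
    intro n
    induction n with
    | zero =>
      intro r hr _
      simp only [pow_zero, mul_one, sub_self, abs_zero]
      positivity
    | succ n ih =>
      intro r hr hr2
      have hr2' : r / 2 < r₀ / 2 := by linarith
      have e1 : r * (2:ℝ)⁻¹ ^ (n+1) = (r/2) * (2:ℝ)⁻¹ ^ n := by ring
      have t1 := step (r/2) r (by positivity) (by linarith) (by linarith) (by linarith)
      have t2 := ih (r/2) (by positivity) hr2'
      have hhalf : (r/2) ^ β = r ^ β * q := by
        rw [hqdef, div_eq_mul_inv, Real.mul_rpow hr.le (by norm_num),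
          Real.inv_rpow (by norm_num), ← Real.rpow_neg (by norm_num)]
      calc |F r - F (r * (2:ℝ)⁻¹ ^ (n+1))|
          = |(F r - F (r/2)) + (F (r/2) - F ((r/2) * (2:ℝ)⁻¹ ^ n))| := by
            rw [e1]; ring_nf
        _ ≤ |F r - F (r/2)| + |F (r/2) - F ((r/2) * (2:ℝ)⁻¹ ^ n)| := abs_add_le _ _
        _ ≤ K * r ^ β + D * (r/2) ^ β := add_le_add t1 t2
        _ = (K + D * q) * r ^ β := by rw [hhalf]; ring
        _ = D * r ^ β := by rw [hDq]
  -- main estimate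
  have main : ∀ ρ r : ℝ, 0 < ρ → ρ < r → r < r₀ / 2 → |F r - F ρ| ≤ (D + K) * r ^ β := by
    intro ρ r hρ hρr hr2
    have hr : 0 < r := lt_trans hρ hρr
    set lg : ℝ := Real.logb 2 (r / ρ) with hlgdef
    have hrρ1 : 1 < r / ρ := (one_lt_div hρ).mpr hρr
    have hlg0 : 0 < lg := Real.logb_pos (by norm_num) hrρ1
    set n : ℕ := ⌊lg⌋₊ with hn
    have hnL : (n:ℝ) ≤ lg := Nat.floor_le hlg0.le
    have hLn : lg < n + 1 := Nat.lt_floor_add_one lg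
    set s : ℝ := r * (2:ℝ)⁻¹ ^ n with hsdef
    have hinv : (2:ℝ)⁻¹ ^ n = (2:ℝ) ^ (-(n:ℝ)) := by
      rw [← Real.rpow_natCast (2:ℝ)⁻¹ n, ← Real.rpow_neg_one (2:ℝ), ← Real.rpow_mul (by norm_num)]
      ring_nf
    have h2L : (2:ℝ) ^ (-lg) = ρ / r := by
      rw [Real.rpow_neg (by norm_num), Real.rpow_logb (by norm_num) (by norm_num) (by positivity),
        inv_div]
    have hρeq : ρ = r * (2:ℝ) ^ (-lg) := by
      rw [h2L]; field_simp
    have hρs : ρ ≤ s := by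
      rw [hρeq, hsdef, hinv]
      apply mul_le_mul_of_nonneg_left _ hr.le
      exact Real.rpow_le_rpow_left_iff (by norm_num) |>.mpr (by linarith)
    have hs2ρ : s ≤ 2 * ρ := by
      rw [hρeq, hsdef, hinv]
      have h6 : (2:ℝ) ^ (-(n:ℝ)) ≤ (2:ℝ) ^ (1 - lg) := by
        exact Real.rpow_le_rpow_left_iff (by norm_num) |>.mpr (by linarith)
      have h7 : (2:ℝ) ^ (1 - lg) = 2 * (2:ℝ) ^ (-lg) := by
        rw [sub_eq_add_neg, Real.rpow_add (by norm_num), Real.rpow_one]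
      calc r * (2:ℝ) ^ (-(n:ℝ)) ≤ r * (2 * (2:ℝ) ^ (-lg)) := by
            rw [← h7]; exact mul_le_mul_of_nonneg_left h6 hr.le
        _ = 2 * (r * (2:ℝ) ^ (-lg)) := by ring
    have hs0 : 0 < s := lt_of_lt_of_le hρ hρs
    have hsr : s ≤ r := by
      rw [hsdef]
      have : (2:ℝ)⁻¹ ^ n ≤ 1 := pow_le_one₀ (by norm_num) (by norm_num)
      nlinarith
    have hstep := step ρ s hρ hρs hs2ρ (by linarith)
    have hkey := key n r hr hr2
    calc |F r - F ρ| = |(F r - F s) + (F s - F ρ)| := by ring_nf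
      _ ≤ |F r - F s| + |F s - F ρ| := abs_add_le _ _
      _ ≤ D * r ^ β + K * s ^ β := add_le_add hkey hstep
      _ ≤ D * r ^ β + K * r ^ β := by
          have : s ^ β ≤ r ^ β := Real.rpow_le_rpow hs0.le hsr hβ.le
          nlinarith
      _ = (D + K) * r ^ β := by ring
  set C' : ℝ := D + K + 1 with hC'def
  have hC'1 : (0:ℝ) < C' := by rw [hC'def]; linarith
  have bullet1 : ∀ ρ r : ℝ, 0 < ρ → ρ < r → r < r₀ / 2 → |F r - F ρ| ≤ C' * r ^ β := by
    intro ρ r hρ hρr hr2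
    have h1 := main ρ r hρ hρr hr2
    have hrβ : (0:ℝ) ≤ r ^ β := Real.rpow_nonneg (le_of_lt (lt_trans hρ hρr)) _
    have h2 : (D + K) * r ^ β ≤ C' * r ^ β :=
      mul_le_mul_of_nonneg_right (by rw [hC'def]; linarith) hrβ
    linarith
  refine ⟨C', hC'1, bullet1, ?_⟩
  -- Cauchy
  have hcauchy : Cauchy (map F (𝓝[>] (0:ℝ))) := by
    rw [Metric.cauchy_iff]
    refine ⟨map_neBot, ?_⟩
    intro ε hε
    have hcont : Tendsto (fun x : ℝ => C' * x ^ β) (𝓝[>] 0) (𝓝 0) := by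
      have h8 : Tendsto (fun x : ℝ => x ^ β) (𝓝[>] (0:ℝ)) (𝓝 ((0:ℝ) ^ β)) :=
        (Real.continuousAt_rpow_const 0 β (Or.inr hβ.le)).continuousWithinAt
      rw [Real.zero_rpow hβ.ne'] at h8
      have h9 := h8.const_mul C'
      rw [mul_zero] at h9
      exact h9
    have hev : ∀ᶠ δ in 𝓝[>] (0:ℝ), C' * δ ^ β < ε ∧ δ ∈ Set.Ioo 0 (r₀/2) := by
      filter_upwards [hcont.eventually (gt_mem_nhds hε),
        Ioo_mem_nhdsGT_of_mem (⟨le_refl 0, by linarith⟩ : (0:ℝ) ∈ Set.Ico 0 (r₀/2)),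
        self_mem_nhdsWithin] with δ h1 h2 h3
      exact ⟨h1, h2⟩
    obtain ⟨δ, hδε, hδ0, hδr⟩ := hev.exists
    refine ⟨F '' Set.Ioo 0 δ, image_mem_map (Ioo_mem_nhdsGT_of_mem ⟨le_refl 0, hδ0⟩), ?_⟩
    rintro x ⟨a, ha, rfl⟩ y ⟨b, hb, rfl⟩
    have hbnd : ∀ u v : ℝ, u ∈ Set.Ioo (0:ℝ) δ → v ∈ Set.Ioo (0:ℝ) δ → u < v →
        |F v - F u| < ε := by
      intro u v hu hv huv
      have h9 := bullet1 u v hu.1 huv (lt_trans hv.2 hδr)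
      have h10 : v ^ β ≤ δ ^ β := Real.rpow_le_rpow (le_of_lt hv.1) hv.2.le hβ.le
      calc |F v - F u| ≤ C' * v ^ β := h9
        _ ≤ C' * δ ^ β := mul_le_mul_of_nonneg_left h10 hC'1.le
        _ < ε := hδε
    rcases lt_trichotomy a b with h | h | h
    · rw [dist_comm, Real.dist_eq]; exact hbnd a b ha hb h
    · rw [h, dist_self]; exact hε
    · rw [Real.dist_eq]; exact hbnd b a hb ha h
  obtain ⟨L, hL⟩ := CompleteSpace.complete hcauchy
  have hLt : Tendsto F (𝓝[>] (0:ℝ)) (𝓝 L) := hL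
  refine ⟨L, hLt, ?_⟩
  intro r hr
  have h1 : Tendsto (fun ρ => |F r - F ρ|) (𝓝[>] (0:ℝ)) (𝓝 |F r - L|) :=
    (tendsto_const_nhds.sub hLt).abs
  have h2 : ∀ᶠ ρ in 𝓝[>] (0:ℝ), |F r - F ρ| ≤ C' * r ^ β := by
    filter_upwards [Ioo_mem_nhdsGT_of_mem (⟨le_refl 0, hr.1⟩ : (0:ℝ) ∈ Set.Ico 0 r)] with ρ hρ
    exact bullet1 ρ r hρ.1 hρ.2 hr.2
  exact le_of_tendsto h1 h2
end
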